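/- arXiv:2409.08771 — 3 statements merged into one kernel-verified Lean document; each statement's English description precedes it below -/
import Mathlib

section
/- Let P be a d×d orthogonal projection of rank r, and σ_1 ≥ ... ≥ σ_d ≥ 0 nonnegative reals with Σ the diagonal matrix of the σ_i. Then ||Σ - ΣP||_F^2 ≤ Σ_{i>r} σ_i^2 + Σ_{i>r} (σ_1^2 - σ_i^2) P_{ii}. -/
open Matrix BigOperators

/-- Squared Frobenius norm of a real matrix. -/
noncomputable def frobSq {n d : ℕ} (A : Matrix (Fin n) (Fin d) ℝ) : ℝ :=
  ∑ i, ∑ j, (A i j) ^ 2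

/-!
Writing `Σ - ΣP = Σ(1 - P)` with `1 - P` again a symmetric idempotent, the squared Frobenius norm
becomes `∑ σᵢ² (1 - Pᵢᵢ)`, because each row of a symmetric idempotent has squared norm equal to
its diagonal entry. On the head `i < r` bound `σᵢ² ≤ σ₁²`; since `0 ≤ 1 - Pᵢᵢ` and the head has at
most `r = ∑ Pᵢᵢ` indices, its total weight `∑_{i<r} (1 - Pᵢᵢ)` is at most the tail mass
`∑_{i≥r} Pᵢᵢ`.
-/

namespace Matrix

variable {n : Type*} [Fintype n] {P : Matrix n n ℝ}

theorem sum_sq_row_eq_diag_of_isIdempotentElem (hP : IsIdempotentElem P) (hPsym : P.IsSymm)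
    (i : n) : ∑ j, P i j ^ 2 = P i i := by
  conv_rhs => rw [← hP.eq, mul_apply]
  refine Finset.sum_congr rfl fun j _ => ?_
  rw [sq, ← hPsym.apply i j]

theorem diag_nonneg_of_isIdempotentElem (hP : IsIdempotentElem P) (hPsym : P.IsSymm) (i : n) :
    0 ≤ P i i :=
  sum_sq_row_eq_diag_of_isIdempotentElem hP hPsym i ▸ by positivity

end Matrix

theorem frobSq_diagonal_mul_of_isIdempotentElem {d : ℕ} (s : Fin d → ℝ)
    {Q : Matrix (Fin d) (Fin d) ℝ} (hQ : IsIdempotentElem Q) (hQsym : Q.IsSymm) :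
    frobSq (diagonal s * Q) = ∑ i, s i ^ 2 * Q i i := by
  unfold frobSq
  refine Finset.sum_congr rfl fun i _ => ?_
  simp only [diagonal_mul, mul_pow, ← Finset.mul_sum,
    sum_sq_row_eq_diag_of_isIdempotentElem hQ hQsym]

theorem Finset.sum_mul_one_sub_le_of_card_le {ι : Type*} [Fintype ι] (q : ι → Prop)
    [DecidablePred q] {w p : ι → ℝ} {M : ℝ} (hM : 0 ≤ M) (hw : ∀ i, ¬ q i → w i ≤ M)
    (hp : ∀ i, ¬ q i → p i ≤ 1) (hcard : ((univ.filter (¬ q ·)).card : ℝ) ≤ ∑ i, p i) :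
    ∑ i, w i * (1 - p i) ≤
      ∑ i ∈ univ.filter q, w i + ∑ i ∈ univ.filter q, (M - w i) * p i := by
  set S := univ.filter q
  set T := univ.filter (¬ q ·)
  have sum_split : ∀ f : ι → ℝ, ∑ i, f i = ∑ i ∈ S, f i + ∑ i ∈ T, f i := fun f =>
    (sum_filter_add_sum_filter_not univ q f).symm
  have head : ∑ i ∈ T, w i * (1 - p i) ≤ M * ∑ i ∈ S, p i :=
    calc ∑ i ∈ T, w i * (1 - p i)
        ≤ ∑ i ∈ T, M * (1 - p i) := sum_le_sum fun i hi => by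
          have hqi := (mem_filter.mp hi).2
          exact mul_le_mul_of_nonneg_right (hw i hqi) (sub_nonneg.mpr (hp i hqi))
      _ = M * (T.card - ∑ i ∈ T, p i) := by
          rw [← mul_sum, sum_sub_distrib, sum_const, nsmul_one]
      _ ≤ M * ∑ i ∈ S, p i := by
          rw [sum_split p] at hcard
          exact mul_le_mul_of_nonneg_left (by linarith) hM
  have tail : ∑ i ∈ S, w i * (1 - p i) + M * ∑ i ∈ S, p i =
      ∑ i ∈ S, w i + ∑ i ∈ S, (M - w i) * p i := by
    rw [mul_sum, ← sum_add_distrib, ← sum_add_distrib]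
    exact sum_congr rfl fun i _ => by ring
  rw [sum_split, ← tail]
  gcongr

/-- Let `P` be a `d×d` orthogonal projection of rank `r` (i.e. `P² = P = Pᵀ`, `Tr P = r`),
and let `Σ = diag(σ 0, ..., σ (d-1))` with `σ 0 ≥ σ 1 ≥ ... ≥ 0` (0-indexed, so `σ 0 = σ_1`
is the largest value). Then
`‖Σ - Σ P‖_F² ≤ ∑_{i > r} σ_i² + ∑_{i > r} (σ_1² - σ_i²) P_{ii}`,
where the sums (1-indexed `i > r`) range over 0-indexed positions `r ≤ i < d`. -/
theorem frob_proj_diag_bound {d r : ℕ} (P : Matrix (Fin d) (Fin d) ℝ)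
    (hP : P * P = P) (hPsym : Pᵀ = P) (htr : Matrix.trace P = (r : ℝ))
    (σ : ℕ → ℝ) (hσdec : Antitone σ) (hσnonneg : ∀ i, 0 ≤ σ i) :
    frobSq ((Matrix.diagonal fun i : Fin d => σ (i : ℕ)) -
        (Matrix.diagonal fun i : Fin d => σ (i : ℕ)) * P) ≤
      (∑ i ∈ Finset.univ.filter (fun i : Fin d => r ≤ (i : ℕ)), σ (i : ℕ) ^ 2) +
        ∑ i ∈ Finset.univ.filter (fun i : Fin d => r ≤ (i : ℕ)),
          (σ 0 ^ 2 - σ (i : ℕ) ^ 2) * P i i := by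
  have hQ : IsIdempotentElem (1 - P) := IsIdempotentElem.one_sub hP
  have hQsym : (1 - P).IsSymm := isSymm_one.sub hPsym
  rw [← mul_one_sub, frobSq_diagonal_mul_of_isIdempotentElem _ hQ hQsym]
  simp only [Matrix.sub_apply, one_apply_eq]
  refine Finset.sum_mul_one_sub_le_of_card_le _ (sq_nonneg _)
    (fun i _ => pow_le_pow_left₀ (hσnonneg _) (hσdec (Nat.zero_le _)) 2)
    (fun i _ => by simpa using diag_nonneg_of_isIdempotentElem hQ hQsym i) ?_
  rw [show ∑ i, P i i = r from htr, Nat.cast_le]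
  calc _ ≤ (Finset.range r).card :=
        Finset.card_le_card_of_injOn Fin.val (fun i hi => by simpa using hi)
          Fin.val_injective.injOn
    _ = r := Finset.card_range r
end

section
/- Let Σ be a d×d diagonal matrix with decreasing positive diagonal entries σ_1 ≥ ... ≥ σ_d > 0 and let Φ̂ be a d×r matrix of rank r. Writing Φ̂_{≤r} for the first r rows and Φ̂_i for the i-th row, for any i > r the i-th diagonal entry P_{ii} of the orthogonal projection P onto the column span of Σ^{k} Φ̂ satisfies P_{ii} ≤ (σ_i^{2k}/σ_r^{2k}) · ||Φ̂_i||_2^2 / λ_min(Φ̂_{≤r}^T Φ̂_{≤r}), provided Φ̂_{≤r} is invertible. -/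
open Matrix BigOperators

/-- Smallest eigenvalue of a symmetric `r×r` real matrix, as the infimum of the Rayleigh
quotient over unit vectors. -/
noncomputable def lambdaMin {r : ℕ} (A : Matrix (Fin r) (Fin r) ℝ) : ℝ :=
  ⨅ x : {x : Fin r → ℝ // ∑ j, x j ^ 2 = 1}, ∑ i, x.1 i * A.mulVec x.1 i

private lemma quad_eq {n m : ℕ} (B : Matrix (Fin n) (Fin m) ℝ) (y : Fin m → ℝ) :
    y ⬝ᵥ (Bᵀ * B).mulVec y = (B.mulVec y) ⬝ᵥ (B.mulVec y) := by
  rw [← Matrix.mulVec_mulVec, Matrix.dotProduct_mulVec, Matrix.vecMul_transpose]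

private lemma dotProduct_self_pos' {n : ℕ} {v : Fin n → ℝ} (hv : v ≠ 0) : 0 < v ⬝ᵥ v := by
  obtain ⟨j, hj⟩ := Function.ne_iff.1 hv
  exact Finset.sum_pos' (fun k _ => mul_self_nonneg _)
    ⟨j, Finset.mem_univ j, mul_self_pos.2 hj⟩

private lemma lambdaMin_facts {r : ℕ} (hr : 0 < r) (C : Matrix (Fin r) (Fin r) ℝ)
    (hpos : ∀ v : Fin r → ℝ, v ≠ 0 → 0 < v ⬝ᵥ C.mulVec v) :
    0 < lambdaMin C ∧ ∀ v : Fin r → ℝ, lambdaMin C * (∑ j, v j ^ 2) ≤ v ⬝ᵥ C.mulVec v := by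
  set f : (Fin r → ℝ) → ℝ := fun x => ∑ i, x i * C.mulVec x i with hf
  have hfc : Continuous f := by
    have : f = fun x => ∑ i, x i * ∑ j, C i j * x j := rfl
    rw [this]
    continuity
  set S : Set (Fin r → ℝ) := {x | ∑ j, x j ^ 2 = 1} with hSdef
  have hS_closed : IsClosed S := isClosed_eq (by continuity) continuous_const
  have hS_bdd : Bornology.IsBounded S := by
    apply (Metric.isBounded_closedBall (x := (0 : Fin r → ℝ)) (r := 1)).subset
    intro x hx
    simp only [Metric.mem_closedBall, dist_zero_right]
    rw [pi_norm_le_iff_of_nonneg zero_le_one]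
    intro j
    rw [Real.norm_eq_abs, abs_le_one_iff_mul_self_le_one, ← sq]
    calc x j ^ 2 ≤ ∑ a, x a ^ 2 :=
          Finset.single_le_sum (fun a _ => sq_nonneg (x a)) (Finset.mem_univ j)
      _ = 1 := hx
  have hS_cpt : IsCompact S := Metric.isCompact_of_isClosed_isBounded hS_closed hS_bdd
  have hS_ne : S.Nonempty := by
    refine ⟨Pi.single ⟨0, hr⟩ 1, ?_⟩
    simp [hSdef, Pi.single_apply, apply_ite (· ^ (2:ℕ))]
  obtain ⟨x₀, hx₀S, hx₀min⟩ := hS_cpt.exists_isMinOn hS_ne hfc.continuousOn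
  have : Nonempty {x : Fin r → ℝ // ∑ j, x j ^ 2 = 1} := ⟨⟨x₀, hx₀S⟩⟩
  have hbdd : BddBelow (Set.range fun x : {x : Fin r → ℝ // ∑ j, x j ^ 2 = 1} => f x.1) := by
    refine ⟨f x₀, ?_⟩
    rintro _ ⟨u, rfl⟩
    exact hx₀min u.2
  have hlowb : f x₀ ≤ lambdaMin C := le_ciInf fun u => hx₀min u.2
  have hx₀ne : x₀ ≠ 0 := by
    intro h
    rw [hSdef] at hx₀S
    simp only [Set.mem_setOf_eq, h] at hx₀S
    simp at hx₀S
  have hlminpos : 0 < lambdaMin C := lt_of_lt_of_le (hpos x₀ hx₀ne) hlowb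
  refine ⟨hlminpos, fun v => ?_⟩
  by_cases hv : v = 0
  · subst hv
    simp [Matrix.mulVec_zero]
  · obtain ⟨j, hj⟩ := Function.ne_iff.1 hv
    have hn : 0 < ∑ j, v j ^ 2 :=
      Finset.sum_pos' (fun a _ => sq_nonneg _) ⟨j, Finset.mem_univ j, sq_pos_of_ne_zero hj⟩
    set n := ∑ j, v j ^ 2 with hndef
    set s := (Real.sqrt n)⁻¹ with hsdef
    have hsq : Real.sqrt n ^ 2 = n := Real.sq_sqrt hn.le
    have hsn : s ^ 2 * n = 1 := by
      rw [hsdef, inv_pow, hsq]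
      exact inv_mul_cancel₀ hn.ne'
    have hu : (∑ j, (s • v) j ^ 2) = 1 := by
      simp only [Pi.smul_apply, smul_eq_mul, mul_pow, ← Finset.mul_sum]
      exact hsn
    have hle : lambdaMin C ≤ f (s • v) := ciInf_le hbdd ⟨s • v, hu⟩
    have hfs : f (s • v) = s ^ 2 * f v := by
      rw [hf]
      simp only [Matrix.mulVec_smul, Pi.smul_apply, smul_eq_mul]
      rw [Finset.mul_sum]
      exact Finset.sum_congr rfl fun a _ => by ring
    rw [hfs] at hle
    show lambdaMin C * n ≤ f v
    calc lambdaMin C * n ≤ (s ^ 2 * f v) * n := mul_le_mul_of_nonneg_right hle hn.le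
      _ = f v * (s ^ 2 * n) := by ring
      _ = f v := by rw [hsn, mul_one]

/-- Let `Σ = diag(σ 0, ..., σ (d-1))` with `σ 0 ≥ ... ≥ σ (d-1) > 0` (0-indexed, so the
1-indexed `σ_r` is `σ (r-1)`), let `Φ̂ : d×r` have rank `r`, with invertible first-`r`-rows
block `Φ̂_{≤r}`. Let `P` be the orthogonal projection onto the column span of `M = Σ^k Φ̂`.
Then for every 1-indexed row `i > r` (0-indexed `r ≤ i`),
`P_{ii} ≤ (σ_i^{2k} / σ_r^{2k}) · ‖Φ̂ᵢ‖₂² / λ_min(Φ̂_{≤r}ᵀ Φ̂_{≤r})`. -/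
theorem diag_proj_power_bound {d r k : ℕ} (hk : 0 < k) (hr : 0 < r) (hrd : r ≤ d)
    (σ : ℕ → ℝ) (hσdec : Antitone σ) (hσpos : ∀ i < d, 0 < σ i)
    (Φ : Matrix (Fin d) (Fin r) ℝ) (hΦrank : Φ.rank = r)
    (Φtop : Matrix (Fin r) (Fin r) ℝ)
    (htop : Φtop = Matrix.of fun i j => Φ (Fin.castLE hrd i) j)
    (hinv : IsUnit Φtop.det)
    (M : Matrix (Fin d) (Fin r) ℝ)
    (hM : M = (Matrix.diagonal fun i : Fin d => σ (i : ℕ)) ^ k * Φ)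
    (P : Matrix (Fin d) (Fin d) ℝ) (hP : P = M * (Mᵀ * M)⁻¹ * Mᵀ)
    (i : Fin d) (hi : r ≤ (i : ℕ)) :
    P i i ≤ σ (i : ℕ) ^ (2 * k) / σ (r - 1) ^ (2 * k) *
        ((∑ j, Φ i j ^ 2) / lambdaMin (Φtopᵀ * Φtop)) := by
  have hrd1 : r - 1 < d := lt_of_lt_of_le (Nat.sub_lt hr one_pos) hrd
  have hσr : 0 < σ (r - 1) := hσpos _ hrd1
  set c : ℝ := σ (r - 1) ^ (2 * k) with hcdef
  have hcpos : 0 < c := pow_pos hσr _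
  set C : Matrix (Fin r) (Fin r) ℝ := Φtopᵀ * Φtop with hCdef
  set A : Matrix (Fin r) (Fin r) ℝ := Mᵀ * M with hAdef
  set x : Fin r → ℝ := fun j => Φ i j with hxdef
  -- entrywise descriptions
  have hMapp : ∀ (a : Fin d) (b : Fin r), M a b = σ (a : ℕ) ^ k * Φ a b := by
    intro a b
    rw [hM, Matrix.diagonal_pow, Matrix.diagonal_mul]
    rfl
  have hMv : ∀ (y : Fin r → ℝ) (a : Fin d),
      M.mulVec y a = σ (a : ℕ) ^ k * Φ.mulVec y a := by
    intro y a
    rw [hM, Matrix.diagonal_pow, ← Matrix.mulVec_mulVec, Matrix.mulVec_diagonal]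
    rfl
  have hΦtopv : ∀ (y : Fin r → ℝ) (a : Fin r),
      Φtop.mulVec y a = Φ.mulVec y (Fin.castLE hrd a) := by
    intro y a
    rw [htop]
    rfl
  -- Φtop injective
  have hΦtopinj : Function.Injective Φtop.mulVec :=
    Matrix.mulVec_injective_iff_isUnit.2 ((Matrix.isUnit_iff_isUnit_det _).2 hinv)
  have hCpos : ∀ v : Fin r → ℝ, v ≠ 0 → 0 < v ⬝ᵥ C.mulVec v := by
    intro v hv
    rw [hCdef, quad_eq]
    apply dotProduct_self_pos'
    intro h
    exact hv (hΦtopinj (by rw [h, Matrix.mulVec_zero]))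
  have hCnn : ∀ u : Fin r → ℝ, 0 ≤ u ⬝ᵥ C.mulVec u := by
    intro u
    by_cases hu : u = 0
    · subst hu; simp
    · exact (hCpos u hu).le
  have hCdet : IsUnit C.det := by
    rw [hCdef, Matrix.det_mul, Matrix.det_transpose]
    exact hinv.mul hinv
  have hCsym : Cᵀ = C := by rw [hCdef, Matrix.transpose_mul, Matrix.transpose_transpose]
  -- quadratic form of A
  have hquadA : ∀ y : Fin r → ℝ, y ⬝ᵥ A.mulVec y = (M.mulVec y) ⬝ᵥ (M.mulVec y) := by
    intro y
    rw [hAdef, quad_eq]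
  have hlowA : ∀ y : Fin r → ℝ, c * (y ⬝ᵥ C.mulVec y) ≤ y ⬝ᵥ A.mulVec y := by
    intro y
    rw [hquadA, hCdef, quad_eq]
    have hL : (Φtop.mulVec y) ⬝ᵥ (Φtop.mulVec y)
        = ∑ a : Fin r, Φ.mulVec y (Fin.castLE hrd a) * Φ.mulVec y (Fin.castLE hrd a) :=
      Finset.sum_congr rfl fun a _ => by rw [hΦtopv]
    have hR : (M.mulVec y) ⬝ᵥ (M.mulVec y)
        = ∑ a : Fin d, σ (a : ℕ) ^ (2 * k) * (Φ.mulVec y a) ^ 2 :=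
      Finset.sum_congr rfl fun a _ => by rw [hMv]; ring
    rw [hL, hR, Finset.mul_sum]
    have hsub := Finset.sum_le_sum_of_subset_of_nonneg
      (f := fun a : Fin d => σ (a : ℕ) ^ (2 * k) * (Φ.mulVec y a) ^ 2)
      (Finset.subset_univ ((Finset.univ : Finset (Fin r)).map (Fin.castLEEmb hrd)))
      (fun a _ _ => mul_nonneg (by rw [pow_mul]; exact pow_nonneg (sq_nonneg _) k)
        (sq_nonneg (Φ.mulVec y a)))
    refine le_trans ?_ hsub
    rw [Finset.sum_map]
    refine Finset.sum_le_sum fun a _ => ?_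
    have h1 : ((Fin.castLEEmb hrd a : Fin d) : ℕ) = (a : ℕ) := rfl
    have h2 : σ (r - 1) ≤ σ (a : ℕ) := hσdec (Nat.le_pred_of_lt a.isLt)
    have h3 : c ≤ σ ((Fin.castLEEmb hrd a : Fin d) : ℕ) ^ (2 * k) := by
      rw [h1, hcdef]
      exact pow_le_pow_left₀ hσr.le h2 _
    calc c * (Φ.mulVec y (Fin.castLE hrd a) * Φ.mulVec y (Fin.castLE hrd a))
        = c * (Φ.mulVec y (Fin.castLEEmb hrd a)) ^ 2 := by rw [sq]; rfl
      _ ≤ σ ((Fin.castLEEmb hrd a : Fin d) : ℕ) ^ (2 * k)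
            * (Φ.mulVec y (Fin.castLEEmb hrd a)) ^ 2 :=
          mul_le_mul_of_nonneg_right h3 (sq_nonneg _)
  -- A invertible
  have hAdet : IsUnit A.det := by
    rw [← Matrix.isUnit_iff_isUnit_det, ← Matrix.mulVec_injective_iff_isUnit]
    have hker : ∀ y, A.mulVec y = 0 → y = 0 := by
      intro y hy
      have h0 : ∑ b, M.mulVec y b * M.mulVec y b = 0 := by
        rw [show ∑ b, M.mulVec y b * M.mulVec y b = (M.mulVec y) ⬝ᵥ (M.mulVec y) from rfl,
          ← hquadA, hy, dotProduct_zero]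
      have hM0 : ∀ a, M.mulVec y a = 0 := fun a =>
        mul_self_eq_zero.1
          ((Finset.sum_eq_zero_iff_of_nonneg fun b _ => mul_self_nonneg (M.mulVec y b)).1 h0
            a (Finset.mem_univ a))
      have hΦ0 : Φtop.mulVec y = 0 := by
        funext a
        have h1 := hM0 (Fin.castLE hrd a)
        rw [hMv] at h1
        have h2 : Φ.mulVec y (Fin.castLE hrd a) = 0 := by
          rcases mul_eq_zero.1 h1 with h | h
          · exact absurd h (pow_ne_zero _ (hσpos _ (Fin.castLE hrd a).isLt).ne')
          · exact h
        rw [hΦtopv, h2]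
        rfl
      exact hΦtopinj (by rw [hΦ0, Matrix.mulVec_zero])
    intro y z hyz
    exact sub_eq_zero.1 (hker (y - z) (by rw [Matrix.mulVec_sub, hyz, sub_self]))
  have hAinv : A * A⁻¹ = 1 := Matrix.mul_nonsing_inv _ hAdet
  have hCinvm : C * C⁻¹ = 1 := Matrix.mul_nonsing_inv _ hCdet
  -- key inequality 5
  have key5 : x ⬝ᵥ A⁻¹.mulVec x ≤ c⁻¹ * (x ⬝ᵥ C⁻¹.mulVec x) := by
    set y := A⁻¹.mulVec x with hy
    set w := C⁻¹.mulVec x with hw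
    have hAy : A.mulVec y = x := by rw [hy, Matrix.mulVec_mulVec, hAinv, Matrix.one_mulVec]
    have hCw : C.mulVec w = x := by rw [hw, Matrix.mulVec_mulVec, hCinvm, Matrix.one_mulVec]
    have hyAy : y ⬝ᵥ A.mulVec y = x ⬝ᵥ y := by
      rw [hAy]
      exact dotProduct_comm y x
    have hwCy : ∀ u : Fin r → ℝ, w ⬝ᵥ C.mulVec u = x ⬝ᵥ u := by
      intro u
      rw [Matrix.dotProduct_mulVec, ← Matrix.mulVec_transpose, hCsym, hCw]
    set z : Fin r → ℝ := c⁻¹ • w - y with hz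
    have hexp : z ⬝ᵥ C.mulVec z
        = c⁻¹ * (c⁻¹ * (x ⬝ᵥ w)) - c⁻¹ * (x ⬝ᵥ y) - (c⁻¹ * (x ⬝ᵥ y) - y ⬝ᵥ C.mulVec y) := by
      simp only [hz, Matrix.mulVec_sub, Matrix.mulVec_smul, hCw, sub_dotProduct,
        dotProduct_sub, smul_dotProduct, dotProduct_smul, smul_eq_mul]
      rw [hwCy y, dotProduct_comm w x, dotProduct_comm y x]
      ring
    have hq := hCnn z
    rw [hexp] at hq
    have h2 := hlowA y
    rw [hyAy] at h2
    show x ⬝ᵥ y ≤ c⁻¹ * (x ⬝ᵥ w)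
    have hce : c * c⁻¹ = 1 := mul_inv_cancel₀ hcpos.ne'
    have h3 : 0 ≤ c⁻¹ * (x ⬝ᵥ w) - 2 * (x ⬝ᵥ y) + c * (y ⬝ᵥ C.mulVec y) := by
      have h4 := mul_le_mul_of_nonneg_left hq hcpos.le
      calc (0 : ℝ) = c * 0 := by ring
        _ ≤ c * (c⁻¹ * (c⁻¹ * (x ⬝ᵥ w)) - c⁻¹ * (x ⬝ᵥ y)
              - (c⁻¹ * (x ⬝ᵥ y) - y ⬝ᵥ C.mulVec y)) := h4
        _ = (c * c⁻¹) * (c⁻¹ * (x ⬝ᵥ w)) - (c * c⁻¹) * (x ⬝ᵥ y)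
              - (c * c⁻¹) * (x ⬝ᵥ y) + c * (y ⬝ᵥ C.mulVec y) := by ring
        _ = c⁻¹ * (x ⬝ᵥ w) - 2 * (x ⬝ᵥ y) + c * (y ⬝ᵥ C.mulVec y) := by rw [hce]; ring
    linarith [h2, h3]
  -- key inequality 6
  have key6 : x ⬝ᵥ C⁻¹.mulVec x ≤ (∑ j, x j ^ 2) / lambdaMin C := by
    set w := C⁻¹.mulVec x with hw
    have hCw : C.mulVec w = x := by rw [hw, Matrix.mulVec_mulVec, hCinvm, Matrix.one_mulVec]
    obtain ⟨hlm, hray⟩ := lambdaMin_facts hr C hCpos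
    have h1 := hray w
    rw [hCw] at h1
    have hcs : (w ⬝ᵥ x) ^ 2 ≤ (∑ j, w j ^ 2) * (∑ j, x j ^ 2) :=
      Finset.sum_mul_sq_le_sq_mul_sq Finset.univ w x
    have hN : (0 : ℝ) ≤ ∑ j, w j ^ 2 := Finset.sum_nonneg fun j _ => sq_nonneg _
    have hX : (0 : ℝ) ≤ ∑ j, x j ^ 2 := Finset.sum_nonneg fun j _ => sq_nonneg _
    rw [dotProduct_comm x w, le_div_iff₀ hlm]
    by_cases hS : 0 < w ⬝ᵥ x
    · nlinarith [h1, hcs, hS, hlm, hN, hX]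
    · push_neg at hS
      nlinarith [hlm, hX, hS]
  -- compute P i i
  have hPdiag : P i i = (fun j => M i j) ⬝ᵥ A⁻¹.mulVec (fun j => M i j) := by
    rw [hP]
    simp only [Matrix.mul_apply, Matrix.transpose_apply, Matrix.mulVec, dotProduct]
    simp only [Finset.sum_mul, Finset.mul_sum]
    rw [Finset.sum_comm]
    exact Finset.sum_congr rfl fun a _ => Finset.sum_congr rfl fun b _ => by ring
  have hrow : (fun j => M i j) = (σ (i : ℕ) ^ k) • x := by
    funext j
    rw [hMapp]
    rfl
  have hPval : P i i = σ (i : ℕ) ^ (2 * k) * (x ⬝ᵥ A⁻¹.mulVec x) := by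
    rw [hPdiag, hrow, Matrix.mulVec_smul, smul_dotProduct, dotProduct_smul,
      smul_eq_mul, smul_eq_mul]
    ring
  have hstep : x ⬝ᵥ A⁻¹.mulVec x ≤ c⁻¹ * ((∑ j, x j ^ 2) / lambdaMin C) :=
    le_trans key5 (mul_le_mul_of_nonneg_left key6 (inv_nonneg.2 hcpos.le))
  have hσnn : (0 : ℝ) ≤ σ (i : ℕ) ^ (2 * k) := by
    rw [pow_mul]
    exact pow_nonneg (sq_nonneg _) k
  rw [hPval]
  calc σ (i : ℕ) ^ (2 * k) * (x ⬝ᵥ A⁻¹.mulVec x)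
      ≤ σ (i : ℕ) ^ (2 * k) * (c⁻¹ * ((∑ j, x j ^ 2) / lambdaMin C)) :=
        mul_le_mul_of_nonneg_left hstep hσnn
    _ = σ (i : ℕ) ^ (2 * k) / c * ((∑ j, x j ^ 2) / lambdaMin C) := by ring
end

section
/- Let Σ = diag(σ_1,...,σ_d) with σ_1 ≥ ... ≥ σ_d > 0, let k ≥ 1 and Φ̂ ∈ R^{d×r} with first-r-rows block Φ̂_{≤r} invertible and remaining block Φ̂_{r<}. Then the squared condition number of Σ^k Φ̂ satisfies κ(Σ^k Φ̂)^2 ≤ (σ_1^{2k} λ_max(Φ̂_{≤r}^T Φ̂_{≤r}) + σ_{r+1}^{2k} λ_max(Φ̂_{r<}^T Φ̂_{r<})) / (σ_r^{2k} λ_min(Φ̂_{≤r}^T Φ̂_{≤r})). -/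
open Matrix BigOperators

/-- Largest singular value: supremum of `‖A x‖₂` over unit vectors. -/
noncomputable def smax {n d : ℕ} (A : Matrix (Fin n) (Fin d) ℝ) : ℝ :=
  ⨆ x : {x : Fin d → ℝ // ∑ j, x j ^ 2 = 1}, Real.sqrt (∑ i, (A.mulVec x.1 i) ^ 2)

/-- Smallest singular value: infimum of `‖A x‖₂` over unit vectors. -/
noncomputable def smin {n d : ℕ} (A : Matrix (Fin n) (Fin d) ℝ) : ℝ :=
  ⨅ x : {x : Fin d → ℝ // ∑ j, x j ^ 2 = 1}, Real.sqrt (∑ i, (A.mulVec x.1 i) ^ 2)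

/-- Largest eigenvalue of a symmetric `r×r` real matrix (Rayleigh quotient supremum). -/
noncomputable def lambdaMax {r : ℕ} (A : Matrix (Fin r) (Fin r) ℝ) : ℝ :=
  ⨆ x : {x : Fin r → ℝ // ∑ j, x j ^ 2 = 1}, ∑ i, x.1 i * A.mulVec x.1 i

section Helpers

lemma quad_eq' {n r : ℕ} (M : Matrix (Fin n) (Fin r) ℝ) (x : Fin r → ℝ) :
    ∑ j, x j * (Mᵀ * M).mulVec x j = ∑ i, (M.mulVec x i) ^ 2 := by
  have h1 : ∀ j, (Mᵀ * M).mulVec x j = Mᵀ.mulVec (M.mulVec x) j := by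
    rw [Matrix.mulVec_mulVec]; intro _; rfl
  calc ∑ j, x j * (Mᵀ * M).mulVec x j
      = x ⬝ᵥ Mᵀ.mulVec (M.mulVec x) := by
        simp only [dotProduct, h1]
    _ = (x ᵥ* Mᵀ) ⬝ᵥ M.mulVec x := Matrix.dotProduct_mulVec x Mᵀ (M.mulVec x)
    _ = M.mulVec x ⬝ᵥ M.mulVec x := by rw [Matrix.vecMul_transpose]
    _ = ∑ i, (M.mulVec x i) ^ 2 := by simp [dotProduct, sq]

lemma mulVec_sq_le' {n r : ℕ} (M : Matrix (Fin n) (Fin r) ℝ) (y : Fin r → ℝ) :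
    ∑ i, (M.mulVec y i) ^ 2 ≤ (∑ i, ∑ j, (M i j) ^ 2) * ∑ j, y j ^ 2 := by
  rw [Finset.sum_mul]
  refine Finset.sum_le_sum fun i _ => ?_
  simpa [Matrix.mulVec, dotProduct] using
    Finset.sum_mul_sq_le_sq_mul_sq Finset.univ (fun j => M i j) y

lemma rayleigh_le_lambdaMax' {n r : ℕ} (M : Matrix (Fin n) (Fin r) ℝ) (x : Fin r → ℝ)
    (hx : ∑ j, x j ^ 2 = 1) :
    ∑ i, (M.mulVec x i) ^ 2 ≤ lambdaMax (Mᵀ * M) := by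
  rw [← quad_eq']
  refine le_ciSup (f := fun x : {x : Fin r → ℝ // ∑ j, x j ^ 2 = 1} =>
    ∑ i, x.1 i * (Mᵀ * M).mulVec x.1 i) ?_ ⟨x, hx⟩
  refine ⟨∑ i, ∑ j, (M i j) ^ 2, ?_⟩
  rintro v ⟨y, rfl⟩
  calc ∑ i, y.1 i * (Mᵀ * M).mulVec y.1 i = ∑ i, (M.mulVec y.1 i) ^ 2 := quad_eq' M y.1
    _ ≤ (∑ i, ∑ j, (M i j) ^ 2) * ∑ j, y.1 j ^ 2 := mulVec_sq_le' M y.1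
    _ = ∑ i, ∑ j, (M i j) ^ 2 := by rw [y.2, mul_one]

lemma lambdaMin_le_rayleigh' {n r : ℕ} (M : Matrix (Fin n) (Fin r) ℝ) (x : Fin r → ℝ)
    (hx : ∑ j, x j ^ 2 = 1) :
    lambdaMin (Mᵀ * M) ≤ ∑ i, (M.mulVec x i) ^ 2 := by
  rw [← quad_eq']
  have hb : BddBelow (Set.range fun y : {x : Fin r → ℝ // ∑ j, x j ^ 2 = 1} =>
      ∑ i, y.1 i * (Mᵀ * M).mulVec y.1 i) := by
    refine ⟨0, ?_⟩
    rintro v ⟨y, rfl⟩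
    simp only
    rw [quad_eq']
    positivity
  exact ciInf_le hb ⟨x, hx⟩

lemma sphere_nonempty' {r : ℕ} (hr : 0 < r) :
    Nonempty {x : Fin r → ℝ // ∑ j, x j ^ 2 = 1} := by
  refine ⟨⟨fun j => if j = ⟨0, hr⟩ then 1 else 0, ?_⟩⟩
  rw [Finset.sum_eq_single ⟨0, hr⟩]
  · simp
  · intro b _ hb; simp [hb]
  · simp

lemma lambdaMin_pos' {r : ℕ} (hr : 0 < r) (M : Matrix (Fin r) (Fin r) ℝ) (h : IsUnit M.det) :
    0 < lambdaMin (Mᵀ * M) := by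
  haveI := sphere_nonempty' hr
  set C := ∑ i, ∑ j, (M⁻¹ i j) ^ 2 with hCdef
  have hC0 : 0 ≤ C := by positivity
  have hCne : C ≠ 0 := by
    intro hC
    have hall : ∀ i j, M⁻¹ i j = 0 := by
      intro i j
      have h1 : ∀ i ∈ Finset.univ, (0:ℝ) ≤ ∑ j, (M⁻¹ i j) ^ 2 := by intros; positivity
      have h2 := (Finset.sum_eq_zero_iff_of_nonneg h1).mp hC i (Finset.mem_univ i)
      have h3 : ∀ j ∈ Finset.univ, (0:ℝ) ≤ (M⁻¹ i j) ^ 2 := by intros; positivity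
      have h4 := (Finset.sum_eq_zero_iff_of_nonneg h3).mp h2 j (Finset.mem_univ j)
      exact pow_eq_zero_iff (by norm_num) |>.mp h4
    have hMinv : M⁻¹ = 0 := by ext i j; exact hall i j
    have h1 : M⁻¹ * M = 1 := Matrix.nonsing_inv_mul M h
    rw [hMinv, zero_mul] at h1
    have := congrFun (congrFun h1 ⟨0, hr⟩) ⟨0, hr⟩
    simp at this
  have hC : 0 < C := lt_of_le_of_ne hC0 (Ne.symm hCne)
  have hlow : ∀ x : {x : Fin r → ℝ // ∑ j, x j ^ 2 = 1},
      1 / C ≤ ∑ i, x.1 i * (Mᵀ * M).mulVec x.1 i := by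
    intro x
    rw [quad_eq', div_le_iff₀ hC]
    have hxeq : M⁻¹.mulVec (M.mulVec x.1) = x.1 := by
      rw [Matrix.mulVec_mulVec, Matrix.nonsing_inv_mul M h, Matrix.one_mulVec]
    have := mulVec_sq_le' M⁻¹ (M.mulVec x.1)
    rw [hxeq, x.2] at this
    linarith [this]
  calc (0:ℝ) < 1 / C := by positivity
    _ ≤ lambdaMin (Mᵀ * M) := le_ciInf hlow

end Helpers

/-- **Condition number bound after diagonal powering.** Let `Σ = diag(σ 0, ..., σ (d-1))`
with `σ 0 ≥ ... ≥ σ (d-1) > 0` (0-indexed: `σ_1 = σ 0`, `σ_r = σ (r-1)`, `σ_{r+1} = σ r`),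
`k ≥ 1`, and `Φ̂ : d×r` (`r < d`) with invertible top block `Φ̂_{≤r}` (first `r` rows) and
bottom block `Φ̂_{r<}` (remaining rows). Then
`κ(Σ^k Φ̂)² ≤ (σ_1^{2k} λ_max(Φ̂_{≤r}ᵀ Φ̂_{≤r}) + σ_{r+1}^{2k} λ_max(Φ̂_{r<}ᵀ Φ̂_{r<}))
  / (σ_r^{2k} λ_min(Φ̂_{≤r}ᵀ Φ̂_{≤r}))`. -/
theorem condition_number_power_bound {d r k : ℕ} (hk : 0 < k) (hr : 0 < r) (hrd : r < d)
    (σ : ℕ → ℝ) (hσdec : Antitone σ) (hσpos : ∀ i < d, 0 < σ i)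
    (Φ : Matrix (Fin d) (Fin r) ℝ)
    (Φtop : Matrix (Fin r) (Fin r) ℝ)
    (htop : Φtop = Matrix.of fun i j => Φ (Fin.castLE hrd.le i) j)
    (Φbot : Matrix (Fin (d - r)) (Fin r) ℝ)
    (hbot : Φbot = Matrix.of fun (i : Fin (d - r)) (j : Fin r) => Φ ⟨r + (i : ℕ), by have := i.2; omega⟩ j)
    (hinv : IsUnit Φtop.det) :
    (smax ((Matrix.diagonal fun i : Fin d => σ (i : ℕ)) ^ k * Φ) /
          smin ((Matrix.diagonal fun i : Fin d => σ (i : ℕ)) ^ k * Φ)) ^ 2 ≤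
      (σ 0 ^ (2 * k) * lambdaMax (Φtopᵀ * Φtop) +
          σ r ^ (2 * k) * lambdaMax (Φbotᵀ * Φbot)) /
        (σ (r - 1) ^ (2 * k) * lambdaMin (Φtopᵀ * Φtop)) := by
  haveI := sphere_nonempty' hr
  set A := (Matrix.diagonal fun i : Fin d => σ (i : ℕ)) ^ k * Φ with hA
  set N := σ 0 ^ (2 * k) * lambdaMax (Φtopᵀ * Φtop)
      + σ r ^ (2 * k) * lambdaMax (Φbotᵀ * Φbot) with hN
  set D := σ (r - 1) ^ (2 * k) * lambdaMin (Φtopᵀ * Φtop) with hD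
  -- entrywise formula for A.mulVec
  have hAmv : ∀ (x : Fin r → ℝ) (i : Fin d), A.mulVec x i = σ (i : ℕ) ^ k * Φ.mulVec x i := by
    intro x i
    rw [hA, Matrix.diagonal_pow, ← Matrix.mulVec_mulVec, Matrix.mulVec_diagonal]
    simp
  -- top and bottom block mulVec identifications
  have htopmv : ∀ (x : Fin r → ℝ) (i : Fin r),
      Φtop.mulVec x i = Φ.mulVec x (Fin.castLE hrd.le i) := by
    intro x i; simp [htop, Matrix.mulVec, dotProduct]
  have hbotmv : ∀ (x : Fin r → ℝ) (i : Fin (d - r)),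
      Φbot.mulVec x i = Φ.mulVec x ⟨r + (i : ℕ), by have := i.2; omega⟩ := by
    intro x i; simp [hbot, Matrix.mulVec, dotProduct]
  -- split the squared norm
  have key : ∀ x : Fin r → ℝ,
      ∑ i, (A.mulVec x i) ^ 2 =
        (∑ i : Fin r, σ (i : ℕ) ^ (2 * k) * (Φtop.mulVec x i) ^ 2) +
        ∑ i : Fin (d - r), σ (r + (i : ℕ)) ^ (2 * k) * (Φbot.mulVec x i) ^ 2 := by
    intro x
    have hterm : ∀ i : Fin d, (A.mulVec x i) ^ 2 = σ (i : ℕ) ^ (2 * k) * (Φ.mulVec x i) ^ 2 := by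
      intro i
      rw [hAmv, mul_pow, ← pow_mul, Nat.mul_comm k 2]
    set g : ℕ → ℝ := fun m => if h : m < d then σ m ^ (2 * k) * (Φ.mulVec x ⟨m, h⟩) ^ 2 else 0
      with hg
    have hgval : ∀ i : Fin d, g (i : ℕ) = σ (i : ℕ) ^ (2 * k) * (Φ.mulVec x i) ^ 2 := by
      intro i
      simp only [hg, dif_pos i.isLt]
    calc ∑ i, (A.mulVec x i) ^ 2
        = ∑ i : Fin d, g (i : ℕ) := by
          refine Finset.sum_congr rfl fun i _ => ?_
          rw [hterm, hgval]
      _ = ∑ m ∈ Finset.range d, g m := Fin.sum_univ_eq_sum_range g d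
      _ = ∑ m ∈ Finset.range (r + (d - r)), g m := by rw [Nat.add_sub_cancel' hrd.le]
      _ = (∑ m ∈ Finset.range r, g m) + ∑ m ∈ Finset.range (d - r), g (r + m) :=
          Finset.sum_range_add g r (d - r)
      _ = (∑ i : Fin r, σ (i : ℕ) ^ (2 * k) * (Φtop.mulVec x i) ^ 2) +
          ∑ i : Fin (d - r), σ (r + (i : ℕ)) ^ (2 * k) * (Φbot.mulVec x i) ^ 2 := by
          congr 1
          · rw [← Fin.sum_univ_eq_sum_range g r]
            refine Finset.sum_congr rfl fun i _ => ?_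
            have hi : (i : ℕ) < d := lt_trans i.isLt hrd
            simp only [hg, dif_pos hi]
            rw [htopmv]
            rfl
          · rw [← Fin.sum_univ_eq_sum_range (fun m => g (r + m)) (d - r)]
            refine Finset.sum_congr rfl fun i _ => ?_
            have hi : r + (i : ℕ) < d := by have := i.2; omega
            simp only [hg, dif_pos hi]
            rw [hbotmv]
  -- upper bound per unit vector
  have upper : ∀ x : Fin r → ℝ, ∑ j, x j ^ 2 = 1 → ∑ i, (A.mulVec x i) ^ 2 ≤ N := by
    intro x hx
    rw [key x]
    have h1 : ∑ i : Fin r, σ (i : ℕ) ^ (2 * k) * (Φtop.mulVec x i) ^ 2 ≤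
        σ 0 ^ (2 * k) * lambdaMax (Φtopᵀ * Φtop) := by
      calc ∑ i : Fin r, σ (i : ℕ) ^ (2 * k) * (Φtop.mulVec x i) ^ 2
          ≤ ∑ i : Fin r, σ 0 ^ (2 * k) * (Φtop.mulVec x i) ^ 2 := by
            refine Finset.sum_le_sum fun i _ => ?_
            refine mul_le_mul_of_nonneg_right ?_ (sq_nonneg _)
            exact pow_le_pow_left₀ (hσpos _ (lt_trans i.isLt hrd)).le
              (hσdec (Nat.zero_le _)) _
        _ = σ 0 ^ (2 * k) * ∑ i : Fin r, (Φtop.mulVec x i) ^ 2 := by rw [Finset.mul_sum]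
        _ ≤ σ 0 ^ (2 * k) * lambdaMax (Φtopᵀ * Φtop) := by
            refine mul_le_mul_of_nonneg_left (rayleigh_le_lambdaMax' Φtop x hx) ?_
            exact pow_nonneg (hσpos 0 (by omega)).le _
    have h2 : ∑ i : Fin (d - r), σ (r + (i : ℕ)) ^ (2 * k) * (Φbot.mulVec x i) ^ 2 ≤
        σ r ^ (2 * k) * lambdaMax (Φbotᵀ * Φbot) := by
      calc ∑ i : Fin (d - r), σ (r + (i : ℕ)) ^ (2 * k) * (Φbot.mulVec x i) ^ 2
          ≤ ∑ i : Fin (d - r), σ r ^ (2 * k) * (Φbot.mulVec x i) ^ 2 := by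
            refine Finset.sum_le_sum fun i _ => ?_
            refine mul_le_mul_of_nonneg_right ?_ (sq_nonneg _)
            exact pow_le_pow_left₀ (hσpos _ (by have := i.2; omega)).le
              (hσdec (Nat.le_add_right r _)) _
        _ = σ r ^ (2 * k) * ∑ i : Fin (d - r), (Φbot.mulVec x i) ^ 2 := by rw [Finset.mul_sum]
        _ ≤ σ r ^ (2 * k) * lambdaMax (Φbotᵀ * Φbot) := by
            refine mul_le_mul_of_nonneg_left (rayleigh_le_lambdaMax' Φbot x hx) ?_
            exact pow_nonneg (hσpos r (by omega)).le _
    rw [hN]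
    exact add_le_add h1 h2
  -- lower bound per unit vector
  have lower : ∀ x : Fin r → ℝ, ∑ j, x j ^ 2 = 1 → D ≤ ∑ i, (A.mulVec x i) ^ 2 := by
    intro x hx
    rw [key x]
    have h1 : D ≤ ∑ i : Fin r, σ (i : ℕ) ^ (2 * k) * (Φtop.mulVec x i) ^ 2 := by
      calc D = σ (r - 1) ^ (2 * k) * lambdaMin (Φtopᵀ * Φtop) := hD
        _ ≤ σ (r - 1) ^ (2 * k) * ∑ i : Fin r, (Φtop.mulVec x i) ^ 2 := by
            refine mul_le_mul_of_nonneg_left (lambdaMin_le_rayleigh' Φtop x hx) ?_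
            exact pow_nonneg (hσpos (r - 1) (by omega)).le _
        _ = ∑ i : Fin r, σ (r - 1) ^ (2 * k) * (Φtop.mulVec x i) ^ 2 := Finset.mul_sum _ _ _
        _ ≤ ∑ i : Fin r, σ (i : ℕ) ^ (2 * k) * (Φtop.mulVec x i) ^ 2 := by
            refine Finset.sum_le_sum fun i _ => ?_
            refine mul_le_mul_of_nonneg_right ?_ (sq_nonneg _)
            refine pow_le_pow_left₀ (hσpos (r - 1) (by omega)).le ?_ _
            exact hσdec (show (i : ℕ) ≤ r - 1 by have := i.isLt; omega)
    have h2 : 0 ≤ ∑ i : Fin (d - r), σ (r + (i : ℕ)) ^ (2 * k) * (Φbot.mulVec x i) ^ 2 := by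
      refine Finset.sum_nonneg fun i _ => ?_
      exact mul_nonneg (pow_nonneg (hσpos _ (by have := i.2; omega)).le _) (sq_nonneg _)
    linarith
  have hDpos : 0 < D := by
    rw [hD]
    exact mul_pos (pow_pos (hσpos (r - 1) (by omega)) _) (lambdaMin_pos' hr Φtop hinv)
  -- bounds on smax and smin
  have hsmax : smax A ≤ Real.sqrt N :=
    ciSup_le fun x => Real.sqrt_le_sqrt (upper x.1 x.2)
  have hsmaxnn : 0 ≤ smax A := Real.iSup_nonneg fun x => Real.sqrt_nonneg _
  have hsmin : Real.sqrt D ≤ smin A :=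
    le_ciInf fun x => Real.sqrt_le_sqrt (lower x.1 x.2)
  have hNnn : 0 ≤ N := by
    obtain ⟨x⟩ := sphere_nonempty' hr
    refine le_trans ?_ (upper x.1 x.2)
    positivity
  have hsmax2 : smax A ^ 2 ≤ N := by
    calc smax A ^ 2 ≤ Real.sqrt N ^ 2 := pow_le_pow_left₀ hsmaxnn hsmax 2
      _ = N := Real.sq_sqrt hNnn
  have hsmin2 : D ≤ smin A ^ 2 := by
    calc D = Real.sqrt D ^ 2 := (Real.sq_sqrt hDpos.le).symm
      _ ≤ smin A ^ 2 := pow_le_pow_left₀ (Real.sqrt_nonneg _) hsmin 2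
  rw [div_pow]
  exact div_le_div₀ hNnn hsmax2 hDpos hsmin2
end
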